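/- Let H be a separable complex Hilbert space, let p ≥ 1, and let x, y : ℤ → H form a pair of dual Riesz bases for H. For k ∈ Fin p and n ∈ ℤ define the forward-difference vectors z_{(k,n)} = ∑_{j=0}^{k} (−1)^{k−j} C(k,j) x_{pn+j} and the vectors w_{(k,n)} = ∑_{j=k}^{p−1} C(j,k) y_{pn+j}, where C(·,·) is the binomial coefficient. Then z : Fin p × ℤ → H is a Riesz basis for H with dual Riesz basis w; in particular, for every F ∈ H the family ((k,n) ↦ ⟨F, z_{(k,n)}⟩ w_{(k,n)}) has sum F (unconditional convergence in H). -/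

import Mathlib

noncomputable section
open scoped Classical

local notation "⟪" f ", " g "⟫" => @inner ℂ _ _ g f

/-- A family `x : ι → H` is a Riesz basis for `H` if it is the image of a Hilbert
(orthonormal) basis of `H` under a continuous linear equivalence of `H`. -/
def IsRieszBasis {H : Type*} [NormedAddCommGroup H] [InnerProductSpace ℂ H]
    {ι : Type*} (x : ι → H) : Prop :=
  ∃ (e : HilbertBasis ι ℂ H) (T : H ≃L[ℂ] H), ∀ i, x i = T (e i)

/-- Families `x, y : ι → H` form a pair of dual Riesz bases: both are Riesz bases,
they are biorthogonal, and `∑ᵢ ⟨f, yᵢ⟩ xᵢ = f` for every `f` (inner product linear in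
the first argument, conjugate-linear in the second). -/
def IsDualRieszBasisPair {H : Type*} [NormedAddCommGroup H] [InnerProductSpace ℂ H]
    {ι : Type*} (x y : ι → H) : Prop :=
  IsRieszBasis x ∧ IsRieszBasis y ∧
    (∀ i j, ⟪x i, y j⟫ = if i = j then (1 : ℂ) else 0) ∧
    ∀ f : H, HasSum (fun i => ⟪f, y i⟫ • x i) f

/-!
Write `x = T e` with `e` a Hilbert basis and `T` invertible. The expansion `f = ∑ ⟨f, yᵢ⟩ xᵢ`
forces `y = (T⁻¹)* e`, and conversely `(A b, (A⁻¹)* b)` is a dual pair for every Hilbert basis `b`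
and invertible `A`; in particular the two roles in a dual pair can be exchanged.

Reindex `e` as `b (k, n) = e (p n + k)`. Block by block, `z` arises from `x` through the lower
triangular matrix `M k j = (-1)^(k-j) C(k,j)`, whose inverse is the Pascal matrix `N j l = C(j,l)`
(Newton's forward difference formula). The operator `S` acting by `M` on every block is therefore
invertible, `S⁻¹` acts by `N` and `(S⁻¹)*` by `Nᴴ`, so that `z = (T S) b` and `w = ((T S)⁻¹)* b`.
-/

open Finset

namespace HilbertBasis

variable {𝕜 ι ι' E : Type*} [RCLike 𝕜] [NormedAddCommGroup E] [InnerProductSpace 𝕜 E]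
  (b : HilbertBasis ι 𝕜 E)

def reindex [CompleteSpace E] (σ : ι ≃ ι') : HilbertBasis ι' 𝕜 E :=
  HilbertBasis.mk (b.orthonormal.comp _ σ.symm.injective)
    (by rw [EquivLike.range_comp, b.dense_span])

@[simp]
lemma reindex_apply [CompleteSpace E] (σ : ι ≃ ι') (i : ι') : b.reindex σ i = b (σ.symm i) := by
  simp [reindex]

lemma inner_eq_of_hasSum {c : ι → 𝕜} {v : E} (h : HasSum (fun j => c j • b j) v) (i : ι) :
    inner 𝕜 (b i) v = c i := by
  have hi := h.mapL (innerSL 𝕜 (b i))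
  simp only [innerSL_apply_apply, inner_smul_right, orthonormal_iff_ite.1 b.orthonormal,
    mul_ite, mul_one, mul_zero] at hi
  rw [hi.unique (hasSum_single i fun j hj => if_neg (Ne.symm hj)), if_pos rfl]

lemma ext_inner {u v : E} (h : ∀ i, inner 𝕜 (b i) u = inner 𝕜 (b i) v) : u = v :=
  b.repr.injective <| lp.ext <| funext fun i => by simp only [b.repr_apply_apply, h]

lemma ext_clm {F : Type*} [NormedAddCommGroup F] [NormedSpace 𝕜 F] {f g : E →L[𝕜] F}
    (h : ∀ i, f (b i) = g (b i)) : f = g :=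
  ContinuousLinearMap.ext_on (Submodule.dense_iff_topologicalClosure_eq_top.2 b.dense_span)
    (Set.forall_mem_range.2 h)

lemma eq_adjoint_of_inner [CompleteSpace E] {A B : E →L[𝕜] E}
    (h : ∀ i j, inner 𝕜 (b j) (A (b i)) = inner 𝕜 (B (b j)) (b i)) :
    A = ContinuousLinearMap.adjoint B :=
  b.ext_clm fun i => b.ext_inner fun j => by
    rw [ContinuousLinearMap.adjoint_inner_right, h]

end HilbertBasis

lemma Int.sum_range_neg_one_pow_mul_choose_mul_choose (k l : ℕ) :
    ∑ j ∈ Finset.range (k + 1), (-1 : ℤ) ^ (k - j) * k.choose j * j.choose l =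
      if k = l then 1 else 0 := by
  have h := fwdDiff_iter_eq_sum_shift (1 : ℕ) (fun x : ℕ => (x.choose l : ℤ)) k 0
  simp only [zero_add, smul_eq_mul, mul_one] at h
  rw [← h, fwdDiff_iter_choose_zero]

section PascalMatrix

variable (R : Type*) [CommRing R] (p : ℕ)

def fwdDiffMatrix : Matrix (Fin p) (Fin p) R :=
  Matrix.of fun k j => (-1) ^ ((k : ℕ) - j) * ((k : ℕ).choose j : R)

def pascalMatrix : Matrix (Fin p) (Fin p) R :=
  Matrix.of fun j l => ((j : ℕ).choose l : R)

lemma fwdDiffMatrix_mul_pascalMatrix : fwdDiffMatrix R p * pascalMatrix R p = 1 := by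
  ext k l
  have h := congrArg (Int.cast : ℤ → R) (Int.sum_range_neg_one_pow_mul_choose_mul_choose k l)
  push_cast at h
  calc (fwdDiffMatrix R p * pascalMatrix R p) k l
      = ∑ j ∈ range p, (-1 : R) ^ ((k : ℕ) - j) * ((k : ℕ).choose j) * (j.choose l) := by
        simp [Matrix.mul_apply, fwdDiffMatrix, pascalMatrix, ← Fin.sum_univ_eq_sum_range
          (fun j => (-1 : R) ^ ((k : ℕ) - j) * ((k : ℕ).choose j) * (j.choose l))]
    _ = ∑ j ∈ range (k + 1), (-1 : R) ^ ((k : ℕ) - j) * ((k : ℕ).choose j) * (j.choose l) :=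
        (sum_subset (range_subset_range.2 k.2) fun j _ hj => by
          simp [Nat.choose_eq_zero_of_lt (not_lt.1 (mem_range.not.1 hj))]).symm
    _ = (1 : Matrix (Fin p) (Fin p) R) k l := by
        simp [h, Matrix.one_apply, Fin.ext_iff]

lemma conjTranspose_pascalMatrix [StarRing R] :
    (pascalMatrix R p).conjTranspose = (pascalMatrix R p).transpose := by
  ext
  simp [pascalMatrix]

variable {R p} {M : Type*} [AddCommGroup M] [Module R M]

lemma sum_fwdDiffMatrix_smul (k : Fin p) (v : ℕ → M) :
    ∑ j : Fin p, fwdDiffMatrix R p k j • v j =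
      ∑ j ∈ range (k + 1), ((-1 : R) ^ ((k : ℕ) - j) * ((k : ℕ).choose j : R)) • v j := by
  simp only [fwdDiffMatrix, Matrix.of_apply]
  rw [Fin.sum_univ_eq_sum_range
    (fun j => ((-1 : R) ^ ((k : ℕ) - j) * ((k : ℕ).choose j : R)) • v j)]
  exact (sum_subset (range_subset_range.2 k.2) fun j _ hj => by
    simp [Nat.choose_eq_zero_of_lt (not_lt.1 (mem_range.not.1 hj))]).symm

lemma sum_pascalMatrix_smul (k : Fin p) (v : ℕ → M) :
    ∑ j : Fin p, (pascalMatrix R p).transpose k j • v j =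
      ∑ j ∈ Icc (k : ℕ) (p - 1), (j.choose k : R) • v j := by
  simp only [pascalMatrix, Matrix.transpose_apply, Matrix.of_apply]
  rw [Fin.sum_univ_eq_sum_range (fun j => (j.choose k : R) • v j)]
  refine (sum_subset (fun j hj => ?_) fun j hj hjk => ?_).symm
  · simp only [mem_Icc] at hj
    exact mem_range.2 (by omega)
  · simp only [mem_Icc, mem_range, not_and_or, not_le] at hj hjk
    simp [Nat.choose_eq_zero_of_lt (by omega : j < k)]

end PascalMatrix

section BlockOperator

variable {𝕜 κ ι E : Type*} [RCLike 𝕜] [NormedAddCommGroup E] [InnerProductSpace 𝕜 E]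
  [CompleteSpace E] (b : HilbertBasis (κ × ι) 𝕜 E)

def blockProj (k : κ) : E →L[𝕜] E :=
  (Submodule.span 𝕜 (b '' {i | i.1 = k})).topologicalClosure.starProjection

lemma blockProj_apply (k : κ) (i : κ × ι) :
    blockProj b k (b i) = if i.1 = k then b i else 0 := by
  split_ifs with h
  · exact Submodule.starProjection_eq_self_iff.2
      (Submodule.le_topologicalClosure _ (Submodule.subset_span ⟨i, h, rfl⟩))
  · rw [blockProj, Submodule.starProjection_apply_eq_zero_iff, Submodule.orthogonal_closure]
    have hortho : Submodule.span 𝕜 {b i} ⟂ Submodule.span 𝕜 (b '' {j | j.1 = k}) :=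
      Submodule.isOrtho_span.2 fun _ hu _ ⟨j, hj, hv⟩ => by
        rw [Set.mem_singleton_iff.1 hu, ← hv]
        exact b.orthonormal.inner_eq_zero (by rintro rfl; exact h hj)
    exact Submodule.isOrtho_iff_le.1 hortho (Submodule.mem_span_singleton_self _)

def blockPerm (σ : Equiv.Perm κ) : E →L[𝕜] E :=
  (b.repr.trans (b.reindex (σ.prodCongr (Equiv.refl ι)).symm).repr.symm).toLinearIsometry
    |>.toContinuousLinearMap

lemma blockPerm_apply (σ : Equiv.Perm κ) (k : κ) (n : ι) :
    blockPerm b σ (b (k, n)) = b (σ k, n) := by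
  simp [blockPerm, b.repr_self]

variable [DecidableEq κ]

def blockSingle (k j : κ) : E →L[𝕜] E :=
  blockPerm b (Equiv.swap k j) ∘L blockProj b k

lemma blockSingle_apply (k j a : κ) (n : ι) :
    blockSingle b k j (b (a, n)) = if a = k then b (j, n) else 0 := by
  rw [blockSingle, ContinuousLinearMap.comp_apply, blockProj_apply]
  split_ifs with h
  · obtain rfl : a = k := h
    rw [blockPerm_apply, Equiv.swap_apply_left]
  · exact map_zero _

variable [Fintype κ]

def blockOp (M : Matrix κ κ 𝕜) : E →L[𝕜] E :=
  ∑ k, ∑ j, M k j • blockSingle b k j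

lemma blockOp_apply (M : Matrix κ κ 𝕜) (k : κ) (n : ι) :
    blockOp b M (b (k, n)) = ∑ j, M k j • b (j, n) := by
  simp [blockOp, blockSingle_apply]

lemma blockOp_mul (M N : Matrix κ κ 𝕜) : blockOp b (M * N) = blockOp b N ∘L blockOp b M := by
  refine b.ext_clm fun ⟨k, n⟩ => ?_
  simp only [ContinuousLinearMap.comp_apply, blockOp_apply, map_sum, map_smul, Matrix.mul_apply,
    sum_smul, smul_sum, smul_smul]
  exact sum_comm

lemma blockOp_one : blockOp b (1 : Matrix κ κ 𝕜) = ContinuousLinearMap.id 𝕜 E :=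
  b.ext_clm fun ⟨k, n⟩ => by simp [blockOp_apply, Matrix.one_apply]

lemma adjoint_blockOp (M : Matrix κ κ 𝕜) :
    ContinuousLinearMap.adjoint (blockOp b M) = blockOp b M.conjTranspose := by
  refine (b.eq_adjoint_of_inner fun ⟨k, n⟩ ⟨l, m⟩ => ?_).symm
  by_cases hmn : m = n <;>
    simp [hmn, blockOp_apply, sum_inner, inner_sum, inner_smul_left, inner_smul_right,
      orthonormal_iff_ite.1 b.orthonormal]

end BlockOperator

namespace ContinuousLinearEquiv

variable {𝕜 E F : Type*} [RCLike 𝕜] [NormedAddCommGroup E] [InnerProductSpace 𝕜 E]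
  [CompleteSpace E] [NormedAddCommGroup F] [InnerProductSpace 𝕜 F] [CompleteSpace F]

protected def adjoint (A : E ≃L[𝕜] F) : F ≃L[𝕜] E :=
  .equivOfInverse' (ContinuousLinearMap.adjoint (A : E →L[𝕜] F))
    (ContinuousLinearMap.adjoint (A.symm : F →L[𝕜] E))
    (by rw [← ContinuousLinearMap.adjoint_comp, coe_symm_comp_coe, ContinuousLinearMap.adjoint_id])
    (by rw [← ContinuousLinearMap.adjoint_comp, coe_comp_coe_symm, ContinuousLinearMap.adjoint_id])

@[simp]
lemma coe_adjoint (A : E ≃L[𝕜] F) :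
    (A.adjoint : F →L[𝕜] E) = ContinuousLinearMap.adjoint (A : E →L[𝕜] F) := rfl

@[simp]
lemma adjoint_apply (A : E ≃L[𝕜] F) (v : F) :
    A.adjoint v = ContinuousLinearMap.adjoint (A : E →L[𝕜] F) v := rfl

@[simp]
lemma adjoint_symm (A : E ≃L[𝕜] F) : A.adjoint.symm = A.symm.adjoint := rfl

lemma adjoint_trans {G : Type*} [NormedAddCommGroup G] [InnerProductSpace 𝕜 G] [CompleteSpace G]
    (A : E ≃L[𝕜] F) (B : F ≃L[𝕜] G) : (A.trans B).adjoint = B.adjoint.trans A.adjoint := by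
  ext v
  simp [← comp_coe, ContinuousLinearMap.adjoint_comp]

end ContinuousLinearEquiv

section BlockEquiv

variable {𝕜 κ ι E : Type*} [RCLike 𝕜] [NormedAddCommGroup E] [InnerProductSpace 𝕜 E]
  [CompleteSpace E] [DecidableEq κ] [Fintype κ] (b : HilbertBasis (κ × ι) 𝕜 E)

def blockEquiv (M N : Matrix κ κ 𝕜) (h : M * N = 1) : E ≃L[𝕜] E :=
  .equivOfInverse' (blockOp b M) (blockOp b N)
    (by rw [← blockOp_mul, mul_eq_one_comm.1 h, blockOp_one])
    (by rw [← blockOp_mul, h, blockOp_one])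

@[simp]
lemma blockEquiv_apply (M N : Matrix κ κ 𝕜) (h : M * N = 1) (v : E) :
    blockEquiv b M N h v = blockOp b M v := rfl

lemma blockEquiv_symm_adjoint_apply (M N : Matrix κ κ 𝕜) (h : M * N = 1) (v : E) :
    (blockEquiv b M N h).symm.adjoint v = blockOp b N.conjTranspose v := by
  rw [ContinuousLinearEquiv.adjoint_apply, ← adjoint_blockOp]
  rfl

end BlockEquiv

section DualRieszBasis

variable {H ι : Type*} [NormedAddCommGroup H] [InnerProductSpace ℂ H] [CompleteSpace H]

lemma hasSum_inner_adjoint_symm_smul (b : HilbertBasis ι ℂ H) (A : H ≃L[ℂ] H) (f : H) :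
    HasSum (fun i => ⟪f, A.symm.adjoint (b i)⟫ • A (b i)) f := by
  simpa [b.repr_apply_apply, ContinuousLinearMap.adjoint_inner_left] using
    (b.hasSum_repr (A.symm f)).mapL (A : H →L[ℂ] H)

lemma IsDualRieszBasisPair.of_hilbertBasis (b : HilbertBasis ι ℂ H) (A : H ≃L[ℂ] H) :
    IsDualRieszBasisPair (fun i => A (b i)) (fun i => A.symm.adjoint (b i)) := by
  refine ⟨⟨b, A, fun _ => rfl⟩, ⟨b, A.symm.adjoint, fun _ => rfl⟩, fun i j => ?_,
    hasSum_inner_adjoint_symm_smul b A⟩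
  simp [ContinuousLinearMap.adjoint_inner_left, orthonormal_iff_ite.1 b.orthonormal, eq_comm]

lemma IsDualRieszBasisPair.exists_hilbertBasis {x y : ι → H} (hxy : IsDualRieszBasisPair x y) :
    ∃ (e : HilbertBasis ι ℂ H) (T : H ≃L[ℂ] H),
      x = (fun i => T (e i)) ∧ y = fun i => T.symm.adjoint (e i) := by
  obtain ⟨⟨e, T, hx⟩, -, -, hexp⟩ := hxy
  refine ⟨e, T, funext hx, funext fun i => ext_inner_right ℂ fun v => ?_⟩
  have hv : HasSum (fun j => inner ℂ (y j) v • e j) (T.symm v) := by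
    simpa [hx] using (hexp v).mapL (T.symm : H →L[ℂ] H)
  rw [← e.inner_eq_of_hasSum hv i]
  simp [ContinuousLinearMap.adjoint_inner_left]

lemma IsDualRieszBasisPair.symm {x y : ι → H} (hxy : IsDualRieszBasisPair x y) :
    IsDualRieszBasisPair y x := by
  obtain ⟨e, T, rfl, rfl⟩ := hxy.exists_hilbertBasis
  simpa using IsDualRieszBasisPair.of_hilbertBasis e T.symm.adjoint

end DualRieszBasis

theorem stmt12_general {H : Type*} [NormedAddCommGroup H] [InnerProductSpace ℂ H]
    [CompleteSpace H]
    {p : ℕ} (hp : 1 ≤ p) (x y : ℤ → H) (hxy : IsDualRieszBasisPair x y)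
    (z w : Fin p × ℤ → H)
    (hz : ∀ (k : Fin p) (n : ℤ), z (k, n) =
      ∑ j ∈ Finset.range ((k : ℕ) + 1),
        ((-1 : ℂ) ^ ((k : ℕ) - j) * (Nat.choose k j : ℂ)) • x ((p : ℤ) * n + (j : ℤ)))
    (hw : ∀ (k : Fin p) (n : ℤ), w (k, n) =
      ∑ j ∈ Finset.Icc (k : ℕ) (p - 1),
        (Nat.choose j k : ℂ) • y ((p : ℤ) * n + (j : ℤ))) :
    IsDualRieszBasisPair z w ∧
      ∀ F : H, HasSum (fun i : Fin p × ℤ => ⟪F, z i⟫ • w i) F := by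
  obtain ⟨e, T, rfl, rfl⟩ := hxy.exists_hilbertBasis
  have : NeZero p := ⟨by omega⟩
  set b := e.reindex ((Int.divModEquiv p).trans (Equiv.prodComm ℤ (Fin p)))
  have hb : ∀ (k : Fin p) (n : ℤ), b (k, n) = e (p * n + k) := fun k n => by
    simp [b, mul_comm]
  set S := blockEquiv b _ _ (fwdDiffMatrix_mul_pascalMatrix ℂ p)
  obtain rfl : z = fun i => (S.trans T) (b i) := funext fun ⟨k, n⟩ => by
    rw [hz, ContinuousLinearEquiv.trans_apply, blockEquiv_apply, blockOp_apply, map_sum]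
    refine (sum_fwdDiffMatrix_smul k fun j : ℕ => T (e (p * n + j))).symm.trans ?_
    simp [hb]
  have hsymm : (S.trans T).symm = T.symm.trans S.symm := rfl
  obtain rfl : w = fun i => (S.trans T).symm.adjoint (b i) := funext fun ⟨k, n⟩ => by
    rw [hw, hsymm, ContinuousLinearEquiv.adjoint_trans, ContinuousLinearEquiv.trans_apply,
      blockEquiv_symm_adjoint_apply, blockOp_apply, map_sum, conjTranspose_pascalMatrix]
    refine (sum_pascalMatrix_smul k fun j : ℕ => T.symm.adjoint (e (p * n + j))).symm.trans ?_
    simp [hb]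
  have h := IsDualRieszBasisPair.of_hilbertBasis b (S.trans T)
  exact ⟨h, h.symm.2.2.2⟩

theorem stmt12 {H : Type*} [NormedAddCommGroup H] [InnerProductSpace ℂ H]
    [CompleteSpace H] [TopologicalSpace.SeparableSpace H]
    {p : ℕ} (hp : 1 ≤ p) (x y : ℤ → H) (hxy : IsDualRieszBasisPair x y)
    (z w : Fin p × ℤ → H)
    (hz : ∀ (k : Fin p) (n : ℤ), z (k, n) =
      ∑ j ∈ Finset.range ((k : ℕ) + 1),
        ((-1 : ℂ) ^ ((k : ℕ) - j) * (Nat.choose k j : ℂ)) • x ((p : ℤ) * n + (j : ℤ)))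
    (hw : ∀ (k : Fin p) (n : ℤ), w (k, n) =
      ∑ j ∈ Finset.Icc (k : ℕ) (p - 1),
        (Nat.choose j k : ℂ) • y ((p : ℤ) * n + (j : ℤ))) :
    IsDualRieszBasisPair z w ∧
      ∀ F : H, HasSum (fun i : Fin p × ℤ => ⟪F, z i⟫ • w i) F :=
  stmt12_general hp x y hxy z w hz hw
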